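/- arXiv:2001.10421 — 4 statements merged into one kernel-verified Lean document; each statement's English description precedes it below -/
import Mathlib

section
/- If f_α is a smoothing family of functions for the shortest-path distance δ_Γ of a digraph Γ (i.e. f_α(x) → 0 and f_α(x)/f_α(1) → 0 as α → ∞ for all x ≥ 2), then the nonlocal transition matrix P_α converges entrywise, as α → ∞, to the standard random-walk transition matrix P = D_out^{-1} A of Γ. -/
/-!
Among the out-neighbours `k ≠ i` of a vertex `i`, the weights `f α (δ(i,k))` all equal `f α 1`,
while every other finite-distance weight is `o(f α 1)`. Dividing numerator and denominator of
`(P_α)_{ij}` by `f α 1`, the denominator tends to the out-degree `d` and the numerator to `1` or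
`0` according as `j` is an out-neighbour, so `(P_α)_{ij} → A_{ij} / d`.
-/

open Finset Filter
open scoped ENNReal Topology

/-- Adjacency matrix (over `ℕ`) of a digraph given by `E`. -/
def adjMat {n : ℕ} (E : Fin n → Fin n → Bool) : Matrix (Fin n) (Fin n) ℕ :=
  Matrix.of fun i j => if E i j then 1 else 0

/-- Shortest-path distance of the digraph `E`: the least length of a walk from `i` to `j`
(`∞` if there is no such walk).  A walk of length `m` exists iff `(A^m) i j ≠ 0`. -/
noncomputable def spDist {n : ℕ} (E : Fin n → Fin n → Bool) (i j : Fin n) : ℝ≥0∞ :=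
  sInf {x : ℝ≥0∞ | ∃ m : ℕ, x = (m : ℝ≥0∞) ∧ (adjMat E ^ m) i j ≠ 0}

section Concentration

variable {β ι : Type*} {l : Filter β} (s : Finset ι) (p : ι → Prop) [DecidablePred p]
  (w : β → ι → ℝ) (c : β → ℝ)

theorem tendsto_sum_div_card_filter (hc : ∀ b, c b ≠ 0)
    (hdom : ∀ b, ∀ k ∈ s, p k → w b k = c b)
    (hsmall : ∀ k ∈ s, ¬ p k → Tendsto (fun b => w b k / c b) l (𝓝 0)) :
    Tendsto (fun b => ∑ k ∈ s, w b k / c b) l (𝓝 (#(s.filter p) : ℝ)) := by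
  have hsplit : ∀ b, ∑ k ∈ s, w b k / c b
      = #(s.filter p) + ∑ k ∈ s.filter (¬ p ·), w b k / c b := by
    intro b
    rw [← sum_filter_add_sum_filter_not s p, sum_congr rfl, sum_const, nsmul_one]
    intro k hk
    rw [hdom b k (mem_filter.1 hk).1 (mem_filter.1 hk).2, div_self (hc b)]
  simp only [hsplit]
  simpa using tendsto_const_nhds.add <| tendsto_finsetSum _ fun k hk =>
    hsmall k (mem_filter.1 hk).1 (mem_filter.1 hk).2

theorem tendsto_div_sum_of_dominant (hc : ∀ b, c b ≠ 0)
    (hdom : ∀ b, ∀ k ∈ s, p k → w b k = c b)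
    (hsmall : ∀ k ∈ s, ¬ p k → Tendsto (fun b => w b k / c b) l (𝓝 0))
    (hne : (s.filter p).Nonempty) {j : ι} (hj : j ∈ s) :
    Tendsto (fun b => w b j / ∑ k ∈ s, w b k) l
      (𝓝 (if p j then 1 / (#(s.filter p) : ℝ) else 0)) := by
  have hrescale : ∀ b, w b j / ∑ k ∈ s, w b k = (w b j / c b) / ∑ k ∈ s, w b k / c b := by
    intro b
    rw [← sum_div, div_div_div_cancel_right₀ (hc b)]
  have hnum : Tendsto (fun b => w b j / c b) l (𝓝 (if p j then 1 else 0)) := by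
    split_ifs with hpj
    · exact tendsto_const_nhds.congr fun b => by rw [hdom b j hj hpj, div_self (hc b)]
    · exact hsmall j hj hpj
  have hden := tendsto_sum_div_card_filter s p w c hc hdom hsmall
  have hcard : (#(s.filter p) : ℝ) ≠ 0 := by exact_mod_cast hne.card_pos.ne'
  have hlim : (if p j then (1 : ℝ) else 0) / #(s.filter p)
      = if p j then 1 / (#(s.filter p) : ℝ) else 0 := by
    split_ifs <;> simp
  rw [← hlim]
  exact (hnum.div hden hcard).congr fun b => (hrescale b).symm

end Concentration

section ShortestPath

variable {n : ℕ} (E : Fin n → Fin n → Bool) {i j : Fin n}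

theorem spDist_le_one (h : E i j = true) : spDist E i j ≤ 1 :=
  sInf_le ⟨1, by norm_cast, by simp [adjMat, h]⟩

theorem spDist_eq_one (hij : j ≠ i) (h : E i j = true) : spDist E i j = 1 := by
  refine le_antisymm (spDist_le_one E h) (le_sInf ?_)
  rintro x ⟨m, rfl, hm⟩
  rcases Nat.eq_zero_or_pos m with rfl | hm_pos
  · simp [Matrix.one_apply_ne hij.symm] at hm
  · exact_mod_cast hm_pos

theorem two_le_spDist (hij : j ≠ i) (h : E i j = false) : 2 ≤ spDist E i j := by
  refine le_sInf ?_
  rintro x ⟨m, rfl, hm⟩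
  have h2 : 2 ≤ m := by
    by_contra! hm2
    interval_cases m
    · simp [Matrix.one_apply_ne hij.symm] at hm
    · simp [adjMat, h] at hm
  exact_mod_cast h2

theorem exists_adj_of_spDist_ne_top (hij : j ≠ i) (h : spDist E i j ≠ ⊤) :
    ∃ k, E i k = true := by
  by_contra! hout
  refine h (sInf_eq_top.mpr ?_)
  rintro x ⟨m, rfl, hm⟩
  cases m with
  | zero => simp [Matrix.one_apply_ne hij.symm] at hm
  | succ m => simp [pow_succ', Matrix.mul_apply, adjMat, hout] at hm

end ShortestPath

theorem nonlocal_transition_tendsto_pagerank_general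
    {n : ℕ} (E : Fin n → Fin n → Bool) (hloop : ∀ i, E i i = false)
    (f : ℝ → ℝ≥0∞ → ℝ)
    (hfpos : ∀ α x, x ≠ ⊤ → 0 < f α x)
    (hsmooth₂ : ∀ x : ℝ≥0∞, 2 ≤ x → Tendsto (fun α => f α x / f α 1) atTop (𝓝 0))
    (P : Matrix (Fin n) (Fin n) ℝ)
    (hPdef : ∀ i j, P i j =
      if E i j then 1 / ((Finset.univ.filter fun k => E i k).card : ℝ) else 0)
    (Pa : ℝ → Matrix (Fin n) (Fin n) ℝ)
    (hPadef : ∀ α i j, Pa α i j =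
      if j ≠ i ∧ spDist E i j ≠ ⊤
      then f α (spDist E i j) / ∑ k ∈ Finset.univ.erase i, f α (spDist E i k)
      else 0) :
    ∀ i j, Tendsto (fun α => Pa α i j) atTop (𝓝 (P i j)) := by
  intro i j
  by_cases hfar : j = i ∨ spDist E i j = ⊤
  · have hE : E i j = false := by
      rcases hfar with rfl | htop
      · exact hloop j
      · exact Bool.eq_false_iff.2 fun hE => ne_top_of_le_ne_top ENNReal.one_ne_top
          (spDist_le_one E hE) htop
    simp only [hPadef, hPdef, hE, show ¬(j ≠ i ∧ spDist E i j ≠ ⊤) by tauto, if_false]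
    exact tendsto_const_nhds
  push Not at hfar
  obtain ⟨hij, hfin⟩ := hfar
  have hout : (univ.erase i).filter (E i · = true) = univ.filter (E i · = true) := by
    ext k
    simpa using fun hE (hk : k = i) => by simp [hk, hloop] at hE
  obtain ⟨k, hk⟩ := exists_adj_of_spDist_ne_top E hij hfin
  have key := tendsto_div_sum_of_dominant (l := atTop) (univ.erase i) (E i · = true)
    (fun α k => f α (spDist E i k)) (fun α => f α 1) (fun α => (hfpos α 1 (by simp)).ne')
    (fun α k hk hE => by rw [spDist_eq_one E (mem_erase.1 hk).1 hE])
    (fun k hk hE => hsmooth₂ _ (two_le_spDist E (mem_erase.1 hk).1 (by simpa using hE)))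
    (by rw [hout]; exact ⟨k, by simpa using hk⟩) (mem_erase.2 ⟨hij, mem_univ j⟩)
  simpa only [hPadef, hPdef, hij, hfin, hout, ne_eq, not_false_eq_true, and_self,
    if_true] using key

/-- If `f_α` is a smoothing family for the shortest-path distance `δ_Γ` of a
loop-less digraph `Γ` (i.e. `f_α(x) → 0` and `f_α(x)/f_α(1) → 0` as `α → ∞` for all `x ≥ 2`),
then the nonlocal transition matrix `P_α` converges entrywise, as `α → ∞`, to the standard
random-walk transition matrix `P = D_out⁻¹ A`. -/
theorem nonlocal_transition_tendsto_pagerank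
    {n : ℕ} (E : Fin n → Fin n → Bool) (hloop : ∀ i, E i i = false)
    (f : ℝ → ℝ≥0∞ → ℝ)
    (hfpos : ∀ α x, x ≠ ⊤ → 0 < f α x)
    (hftop : ∀ α, f α ⊤ = 0)
    (hfanti : ∀ α, Antitone (f α))
    (hsmooth₁ : ∀ x : ℝ≥0∞, 2 ≤ x → Tendsto (fun α => f α x) atTop (𝓝 0))
    (hsmooth₂ : ∀ x : ℝ≥0∞, 2 ≤ x → Tendsto (fun α => f α x / f α 1) atTop (𝓝 0))
    (P : Matrix (Fin n) (Fin n) ℝ)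
    (hPdef : ∀ i j, P i j =
      if E i j then 1 / ((Finset.univ.filter fun k => E i k).card : ℝ) else 0)
    (Pa : ℝ → Matrix (Fin n) (Fin n) ℝ)
    (hPadef : ∀ α i j, Pa α i j =
      if j ≠ i ∧ spDist E i j ≠ ⊤
      then f α (spDist E i j) / ∑ k ∈ Finset.univ.erase i, f α (spDist E i k)
      else 0) :
    ∀ i j, Tendsto (fun α => Pa α i j) atTop (𝓝 (P i j)) :=
  nonlocal_transition_tendsto_pagerank_general E hloop f hfpos hsmooth₂ P hPdef Pa hPadef
end

section
/- If λ is an eigenvalue of a row-stochastic matrix G with λ ≠ 1, then |λ| ≤ τ₁(G), where τ₁(G) = (1/2)·max_{i,j} Σ_k |G_{ik} − G_{jk}| is the ergodicity coefficient. -/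
/-!
Subtracting the eigen-equations at two coordinates `p`, `q` gives
`λ (v p - v q) = ∑ k, (G p k - G q k) v k`, whose coefficients sum to zero. Writing such
coefficients as `a = a⁺ - a⁻`, both parts have mass `s = (∑ k, |a k|) / 2`, and
`s • ∑ k, a k • v k = ∑ k, ∑ l, (a⁺ k * a⁻ l) • (v k - v l)` has norm at most
`s² · max ‖v k - v l‖`.
Choosing `p`, `q` to attain that maximum, which is positive because a constant eigenvector
forces `λ = 1`, yields `‖λ‖ ≤ τ₁(G)`.
-/

open Finset

section
variable {ι E : Type*} [Fintype ι] [SeminormedAddCommGroup E] [NormedSpace ℝ E]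

theorem sum_negPart_eq_sum_posPart {a : ι → ℝ} (ha : ∑ k, a k = 0) :
    ∑ k, (a k)⁻ = ∑ k, (a k)⁺ := by
  have : ∑ k, ((a k)⁺ - (a k)⁻) = 0 := by simpa only [posPart_sub_negPart] using ha
  rwa [sum_sub_distrib, sub_eq_zero, eq_comm] at this

theorem sum_posPart_smul_sum_smul_eq_sum_sum {a : ι → ℝ} (ha : ∑ k, a k = 0) (v : ι → E) :
    (∑ k, (a k)⁺) • ∑ k, a k • v k = ∑ k, ∑ l, ((a k)⁺ * (a l)⁻) • (v k - v l) := by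
  have hsplit : ∑ k, a k • v k = ∑ k, (a k)⁺ • v k - ∑ k, (a k)⁻ • v k := by
    simp_rw [← sum_sub_distrib, ← sub_smul, posPart_sub_negPart]
  simp_rw [smul_sub, sum_sub_distrib, mul_smul, ← smul_sum, ← sum_smul, smul_comm ((a _)⁺),
    ← smul_sum, sum_negPart_eq_sum_posPart ha, ← smul_sub, hsplit]

theorem norm_sum_smul_le_of_sum_eq_zero {a : ι → ℝ} (ha : ∑ k, a k = 0) {v : ι → E} {M : ℝ}
    (hM : ∀ k l, ‖v k - v l‖ ≤ M) :
    ‖∑ k, a k • v k‖ ≤ (∑ k, |a k|) / 2 * M := by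
  obtain ⟨s, hpos⟩ : ∃ s, ∑ k, (a k)⁺ = s := ⟨_, rfl⟩
  have hneg : ∑ k, (a k)⁻ = s := (sum_negPart_eq_sum_posPart ha).trans hpos
  have hs_nonneg : 0 ≤ s := hpos ▸ sum_nonneg fun k _ => posPart_nonneg (a k)
  have habs : ∑ k, |a k| = 2 * s := by
    simp_rw [← posPart_add_negPart, sum_add_distrib, hpos, hneg, two_mul]
  have hw : ∀ k l, 0 ≤ (a k)⁺ * (a l)⁻ := fun k l =>
    mul_nonneg (posPart_nonneg _) (negPart_nonneg _)
  have hpairs : s * ‖∑ k, a k • v k‖ ≤ s * (s * M) := calc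
    s * ‖∑ k, a k • v k‖ = ‖∑ k, ∑ l, ((a k)⁺ * (a l)⁻) • (v k - v l)‖ := by
      rw [← sum_posPart_smul_sum_smul_eq_sum_sum ha, hpos, norm_smul,
        Real.norm_of_nonneg hs_nonneg]
    _ ≤ ∑ k, ∑ l, (a k)⁺ * (a l)⁻ * M := by
      refine (norm_sum_le _ _).trans (sum_le_sum fun k _ => (norm_sum_le _ _).trans
        (sum_le_sum fun l _ => ?_))
      rw [norm_smul, Real.norm_of_nonneg (hw k l)]
      exact mul_le_mul_of_nonneg_left (hM k l) (hw k l)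
    _ = s * (s * M) := by
      simp_rw [mul_assoc, ← mul_sum, ← sum_mul, hneg, hpos]
  obtain hs | hs := hs_nonneg.eq_or_lt
  · have ha0 : ∀ k, a k = 0 := fun k => abs_eq_zero.mp <|
      (sum_eq_zero_iff_of_nonneg fun k _ => abs_nonneg (a k)).mp (by rw [habs, ← hs, mul_zero])
        k (mem_univ k)
    simp [ha0]
  · rw [habs, mul_div_cancel_left₀ s two_ne_zero]
    exact le_of_mul_le_mul_left hpairs hs

end

theorem exists_ne_of_eigenvalue_ne_one {ι : Type*} [Fintype ι] {G : Matrix ι ι ℝ}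
    (hG1 : ∀ i, ∑ j, G i j = 1) {lam : ℂ} (hlam : lam ≠ 1) {v : ι → ℂ} (hv : v ≠ 0)
    (heig : ∀ i, ∑ k, G i k • v k = lam * v i) : ∃ p q, v p ≠ v q := by
  by_contra! hconst
  obtain ⟨i, hi⟩ := Function.ne_iff.mp hv
  have hfix : ∑ k, G i k • v k = v i := by
    simp_rw [hconst _ i, ← sum_smul, hG1, one_smul]
  exact hlam (mul_right_cancel₀ hi (by rw [one_mul, ← heig i, hfix]))

theorem eigenvalue_le_ergodicity_coefficient_general
    {n : ℕ} (G : Matrix (Fin n) (Fin n) ℝ)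
    (hG1 : ∀ i, ∑ j, G i j = 1)
    (lam : ℂ) (hlam : lam ≠ 1)
    (v : Fin n → ℂ) (hv : v ≠ 0)
    (heig : (G.map (fun x : ℝ => (x : ℂ))).mulVec v = lam • v) :
    ‖lam‖ ≤ (1 / 2) * ⨆ i : Fin n, ⨆ j : Fin n, ∑ k, |G i k - G j k| := by
  have heig' : ∀ i, ∑ k, G i k • v k = lam * v i := fun i => by
    simpa [Matrix.mulVec, dotProduct, Complex.real_smul] using congrFun heig i
  obtain ⟨p₀, q₀, hne⟩ := exists_ne_of_eigenvalue_ne_one hG1 hlam hv heig'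
  have : Nonempty (Fin n) := ⟨p₀⟩
  obtain ⟨⟨p, q⟩, hmax⟩ := Finite.exists_max fun x : Fin n × Fin n => ‖v x.1 - v x.2‖
  have hM_pos : 0 < ‖v p - v q‖ :=
    (norm_pos_iff.mpr (sub_ne_zero.mpr hne)).trans_le (hmax (p₀, q₀))
  have hdiff : lam * (v p - v q) = ∑ k, (G p k - G q k) • v k := by
    simp_rw [mul_sub, ← heig', sub_smul, sum_sub_distrib]
  have hrow : ∑ k, (G p k - G q k) = 0 := by rw [sum_sub_distrib, hG1, hG1, sub_self]
  have hkey := norm_sum_smul_le_of_sum_eq_zero hrow fun k l => hmax (k, l)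
  rw [← hdiff, norm_mul] at hkey
  have hτ : ∑ k, |G p k - G q k| ≤ ⨆ i, ⨆ j, ∑ k, |G i k - G j k| :=
    le_ciSup_of_le (Set.finite_range _).bddAbove p <|
      le_ciSup (f := fun j => ∑ k, |G p k - G j k|) (Set.finite_range _).bddAbove q
  calc ‖lam‖ ≤ (∑ k, |G p k - G q k|) / 2 := le_of_mul_le_mul_right hkey hM_pos
    _ ≤ (1 / 2) * ⨆ i, ⨆ j, ∑ k, |G i k - G j k| := by linarith

/-- If `λ ≠ 1` is a (complex) eigenvalue of a row-stochastic matrix `G`,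
then `|λ| ≤ τ₁(G) = (1/2)·max_{i,j} Σ_k |G_{ik} − G_{jk}|`. -/
theorem eigenvalue_le_ergodicity_coefficient
    {n : ℕ} (G : Matrix (Fin n) (Fin n) ℝ)
    (hG0 : ∀ i j, 0 ≤ G i j) (hG1 : ∀ i, ∑ j, G i j = 1)
    (lam : ℂ) (hlam : lam ≠ 1)
    (v : Fin n → ℂ) (hv : v ≠ 0)
    (heig : (G.map (fun x : ℝ => (x : ℂ))).mulVec v = lam • v) :
    ‖lam‖ ≤ (1 / 2) * ⨆ i : Fin n, ⨆ j : Fin n, ∑ k, |G i k - G j k| :=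
  eigenvalue_le_ergodicity_coefficient_general G hG1 lam hlam v hv heig
end

section
/- Let G and Ḡ be positive row-stochastic matrices with stationary distributions s and s̄ (row vectors with s^T = s^T G, s^T 1 = 1, and similarly for s̄). If R = G − Ḡ satisfies R·1 = 0, then ‖s − s̄‖₁ ≤ ‖R‖₁ / (1 − τ₁(G)), where τ₁(G) < 1 is the ergodicity coefficient and ‖·‖₁ is the induced matrix/vector 1-norm acting on row vectors. -/
open Finset

/-- Ergodicity coefficient `τ₁(G) = sup{ ‖δᵀG‖₁ : ‖δ‖₁ = 1, δᵀ1 = 0 }`. -/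
noncomputable def tauOneSup {n : ℕ} (G : Matrix (Fin n) (Fin n) ℝ) : ℝ :=
  sSup {x : ℝ | ∃ d : Fin n → ℝ, (∑ i, |d i|) = 1 ∧ (∑ i, d i) = 0 ∧
    x = ∑ j, |∑ i, d i * G i j|}

/-! The difference `d = s - s̄` sums to zero and satisfies `d = d G + s̄ R`, so
`‖d‖₁ ≤ τ₁(G) ‖d‖₁ + ‖R‖₁`. That `τ₁(G) < 1` is Doeblin's minorization bound
`τ₁(G) ≤ 1 - ∑ⱼ minᵢ Gᵢⱼ`: on zero-sum vectors, `d G` does not change when the row of column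
minima is subtracted from every row of `G`, and the remaining matrix has row sums `1 - ∑ⱼ minᵢ Gᵢⱼ`. -/

open Matrix

section RowVectors

variable {ι κ : Type*} [Fintype ι] [Fintype κ]

theorem sum_abs_vecMul_le_sum_abs_mul_iSup (v : ι → ℝ) (R : Matrix ι κ ℝ) :
    ∑ j, |(v ᵥ* R) j| ≤ (∑ i, |v i|) * ⨆ i, ∑ j, |R i j| := by
  have hrow : ∀ i, ∑ j, |R i j| ≤ ⨆ i, ∑ j, |R i j| := fun i =>
    le_ciSup (f := fun i => ∑ j, |R i j|) (Set.finite_range _).bddAbove i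
  calc ∑ j, |(v ᵥ* R) j| ≤ ∑ j, ∑ i, |v i| * |R i j| := by
        gcongr with j
        exact (abs_sum_le_sum_abs _ _).trans_eq (by simp only [abs_mul])
    _ = ∑ i, |v i| * ∑ j, |R i j| := by simp only [sum_comm (γ := κ), mul_sum]
    _ ≤ ∑ i, |v i| * ⨆ i, ∑ j, |R i j| := by gcongr with i; exact hrow i
    _ = (∑ i, |v i|) * ⨆ i, ∑ j, |R i j| := (sum_mul ..).symm

theorem sum_abs_vecMul_le_one_sub_sum_mul {G : Matrix ι κ ℝ} {m : κ → ℝ} {d : ι → ℝ}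
    (hrow : ∀ i, ∑ j, G i j = 1) (hm : ∀ i j, m j ≤ G i j) (hd : ∑ i, d i = 0) :
    ∑ j, |(d ᵥ* G) j| ≤ (1 - ∑ j, m j) * ∑ i, |d i| := by
  have hshift : ∀ j, (d ᵥ* G) j = ∑ i, d i * (G i j - m j) := fun j => by
    simp only [mul_sub, sum_sub_distrib, ← sum_mul, hd, zero_mul, sub_zero]; rfl
  calc ∑ j, |(d ᵥ* G) j| ≤ ∑ j, ∑ i, |d i| * (G i j - m j) := by
        gcongr with j
        rw [hshift]
        refine (abs_sum_le_sum_abs _ _).trans_eq (sum_congr rfl fun i _ => ?_)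
        rw [abs_mul, abs_of_nonneg (sub_nonneg.2 (hm i j))]
    _ = ∑ i, |d i| * (1 - ∑ j, m j) := by
        rw [sum_comm]
        simp only [← mul_sum, sum_sub_distrib, hrow]
    _ = (1 - ∑ j, m j) * ∑ i, |d i| := by rw [← sum_mul, mul_comm]

theorem sub_eq_sub_vecMul_add_vecMul_sub {s t : ι → ℝ} {G H : Matrix ι ι ℝ}
    (hs : s ᵥ* G = s) (ht : t ᵥ* H = t) : s - t = (s - t) ᵥ* G + t ᵥ* (G - H) := by
  rw [sub_vecMul, vecMul_sub, hs, ht]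
  abel

end RowVectors

section ErgodicityCoefficient

variable {n : ℕ} (G : Matrix (Fin n) (Fin n) ℝ)

theorem le_tauOneSup {d : Fin n → ℝ} (hd1 : ∑ i, |d i| = 1) (hd0 : ∑ i, d i = 0) :
    ∑ j, |(d ᵥ* G) j| ≤ tauOneSup G := by
  refine le_csSup ⟨(∑ i, |d i|) * ⨆ i, ∑ j, |G i j|, ?_⟩ ⟨d, hd1, hd0, rfl⟩
  rintro _ ⟨e, he1, -, rfl⟩
  rw [hd1, ← he1]
  exact sum_abs_vecMul_le_sum_abs_mul_iSup e G

theorem tauOneSup_le {c : ℝ} (hc : 0 ≤ c)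
    (h : ∀ d : Fin n → ℝ, ∑ i, |d i| = 1 → ∑ i, d i = 0 → ∑ j, |(d ᵥ* G) j| ≤ c) :
    tauOneSup G ≤ c :=
  Real.sSup_le (by rintro _ ⟨d, hd1, hd0, rfl⟩; exact h d hd1 hd0) hc

theorem sum_abs_vecMul_le_tauOneSup_mul {d : Fin n → ℝ} (hd0 : ∑ i, d i = 0) :
    ∑ j, |(d ᵥ* G) j| ≤ tauOneSup G * ∑ i, |d i| := by
  rcases eq_or_ne d 0 with rfl | hd
  · simp
  obtain ⟨i, hi⟩ := Function.ne_iff.1 hd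
  have hc : 0 < ∑ i, |d i| :=
    sum_pos' (fun i _ => abs_nonneg (d i)) ⟨i, mem_univ i, abs_pos.2 hi⟩
  have hnorm : ∑ i, |((∑ i, |d i|)⁻¹ • d) i| = 1 := by
    simp only [Pi.smul_apply, smul_eq_mul, abs_mul, abs_inv, abs_of_pos hc, ← mul_sum]
    exact inv_mul_cancel₀ hc.ne'
  have hzero : ∑ i, ((∑ i, |d i|)⁻¹ • d) i = 0 := by
    simp only [Pi.smul_apply, smul_eq_mul, ← mul_sum, hd0, mul_zero]
  have key := le_tauOneSup G hnorm hzero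
  simp only [smul_vecMul, Pi.smul_apply, smul_eq_mul, abs_mul, abs_inv, abs_of_pos hc,
    ← mul_sum] at key
  rwa [inv_mul_le_iff₀ hc, mul_comm] at key

theorem tauOneSup_lt_one (hpos : ∀ i j, 0 < G i j) (hrow : ∀ i, ∑ j, G i j = 1) :
    tauOneSup G < 1 := by
  rcases isEmpty_or_nonempty (Fin n) with hn | hn
  · exact (tauOneSup_le G le_rfl fun d hd1 _ => by simp at hd1).trans_lt one_pos
  · obtain ⟨i₀⟩ := id hn
    set m : Fin n → ℝ := fun j => univ.inf' univ_nonempty fun i => G i j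
    have hm : ∀ i j, m j ≤ G i j := fun i j => inf'_le _ (mem_univ i)
    have hm_pos : 0 < ∑ j, m j :=
      sum_pos (fun j _ => (lt_inf'_iff _).2 fun i _ => hpos i j) univ_nonempty
    have hm_le : ∑ j, m j ≤ 1 := (sum_le_sum fun j _ => hm i₀ j).trans_eq (hrow i₀)
    refine (tauOneSup_le G (sub_nonneg.2 hm_le) fun d hd1 hd0 => ?_).trans_lt (by linarith)
    simpa [hd1] using sum_abs_vecMul_le_one_sub_sum_mul hrow hm hd0

theorem sum_abs_le_div_one_sub_tauOneSup {d e : Fin n → ℝ} (hτ : tauOneSup G < 1)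
    (hd0 : ∑ i, d i = 0) (hd : d = d ᵥ* G + e) :
    ∑ i, |d i| ≤ (∑ i, |e i|) / (1 - tauOneSup G) := by
  have hcontr := sum_abs_vecMul_le_tauOneSup_mul G hd0
  have htri : ∑ i, |d i| ≤ ∑ j, |(d ᵥ* G) j| + ∑ i, |e i| := by
    conv_lhs => rw [hd]
    exact (sum_le_sum fun i _ => abs_add_le _ _).trans_eq sum_add_distrib
  rw [le_div_iff₀ (sub_pos.2 hτ)]
  linarith

end ErgodicityCoefficient

theorem stationary_distribution_perturbation_bound_general
    {n : ℕ} (G Gbar : Matrix (Fin n) (Fin n) ℝ)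
    (hGpos : ∀ i j, 0 < G i j) (hG1 : ∀ i, ∑ j, G i j = 1)
    (s sbar : Fin n → ℝ)
    (hs1 : ∑ i, s i = 1) (hs : ∀ j, ∑ i, s i * G i j = s j)
    (hsbar0 : ∀ i, 0 < sbar i) (hsbar1 : ∑ i, sbar i = 1)
    (hsbar : ∀ j, ∑ i, sbar i * Gbar i j = sbar j)
    (R : Matrix (Fin n) (Fin n) ℝ) (hR : R = G - Gbar) :
    tauOneSup G < 1 ∧
      ∑ j, |s j - sbar j| ≤ (⨆ i : Fin n, ∑ j, |R i j|) / (1 - tauOneSup G) := by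
  subst hR
  have hτ := tauOneSup_lt_one G hGpos hG1
  refine ⟨hτ, ?_⟩
  have hsum : ∑ i, (s - sbar) i = 0 := by simp [sum_sub_distrib, hs1, hsbar1]
  have hsbar_norm : ∑ i, |sbar i| = 1 := by simpa [abs_of_pos (hsbar0 _)] using hsbar1
  have hbound := sum_abs_le_div_one_sub_tauOneSup G hτ hsum
    (sub_eq_sub_vecMul_add_vecMul_sub (funext hs) (funext hsbar))
  refine hbound.trans (div_le_div_of_nonneg_right ?_ (sub_pos.2 hτ).le)
  simpa [hsbar_norm] using sum_abs_vecMul_le_sum_abs_mul_iSup sbar (G - Gbar)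

/-- If `G, Ḡ` are positive row-stochastic matrices with stationary distributions
`s, s̄`, and `R = G − Ḡ` (so `R·1 = 0`), then `τ₁(G) < 1` and
`‖s − s̄‖₁ ≤ ‖R‖₁ / (1 − τ₁(G))`, where `‖R‖₁ = max_i Σ_j |R_{ij}|` is the operator norm for
left-multiplication by row vectors in the 1-norm. -/
theorem stationary_distribution_perturbation_bound
    {n : ℕ} (hn : 0 < n) (G Gbar : Matrix (Fin n) (Fin n) ℝ)
    (hGpos : ∀ i j, 0 < G i j) (hG1 : ∀ i, ∑ j, G i j = 1)
    (hGbarpos : ∀ i j, 0 < Gbar i j) (hGbar1 : ∀ i, ∑ j, Gbar i j = 1)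
    (s sbar : Fin n → ℝ)
    (hs0 : ∀ i, 0 < s i) (hs1 : ∑ i, s i = 1) (hs : ∀ j, ∑ i, s i * G i j = s j)
    (hsbar0 : ∀ i, 0 < sbar i) (hsbar1 : ∑ i, sbar i = 1)
    (hsbar : ∀ j, ∑ i, sbar i * Gbar i j = sbar j)
    (R : Matrix (Fin n) (Fin n) ℝ) (hR : R = G - Gbar)
    (hRrow : ∀ i, ∑ j, R i j = 0) :
    tauOneSup G < 1 ∧
      ∑ j, |s j - sbar j| ≤ (⨆ i : Fin n, ∑ j, |R i j|) / (1 - tauOneSup G) :=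
  stationary_distribution_perturbation_bound_general G Gbar hGpos hG1 s sbar hs1 hs hsbar0 hsbar1
    hsbar R hR
end

section
/- For the undirected cycle graph C_n, the nonlocal PageRank transition matrix P_α (built with the shortest-path distance and any positive nonincreasing f_α) is doubly stochastic, and consequently the uniform vector (1/n)·1 is the stationary distribution of G_α = c·P_α + ((1−c)/n)·1 1^T for every α > 0 and every c ∈ (0,1]. -/
/-!
The cyclic shifts `k ↦ k + d` are isometries of `C_n` acting transitively, so the off-diagonal
row sums `S = ∑_{k ≠ i} f(δ(i,k))` do not depend on `i`. Since `δ` is symmetric, `P_α` is then a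
symmetric matrix `f(δ(i,j)) / S` off the diagonal, hence doubly stochastic. For every `c`,
`c·P_α + ((1−c)/n)·11ᵀ` then has unit column sums, which is exactly the stationarity of the
uniform vector.
-/

open Finset

/-- Shortest-path distance on the undirected cycle `C_n`: `δ(i,j) = min(|i−j|, n−|i−j|)`,
expressed via cyclic subtraction on `Fin n`. -/
def cycleDist {n : ℕ} [NeZero n] (i j : Fin n) : ℝ :=
  min (((j - i : Fin n) : ℕ) : ℝ) (((i - j : Fin n) : ℕ) : ℝ)

noncomputable def nonlocalTransition {ι : Type*} [Fintype ι] [DecidableEq ι] (w : ι → ι → ℝ) :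
    Matrix ι ι ℝ :=
  Matrix.of fun i j => if j = i then 0 else w i j / ∑ k ∈ univ.erase i, w i k

section NonlocalTransition

variable {ι : Type*} [Fintype ι] [DecidableEq ι] (w : ι → ι → ℝ)

lemma nonlocalTransition_row_sum (i : ι) (hi : ∑ k ∈ univ.erase i, w i k ≠ 0) :
    ∑ j, nonlocalTransition w i j = 1 := by
  simp only [nonlocalTransition, Matrix.of_apply, sum_ite, sum_const_zero, zero_add,
    filter_ne', ← sum_div]
  exact div_self hi

lemma nonlocalTransition_col_sum (hsymm : ∀ i j, w i j = w j i)
    (hconst : ∀ i j, ∑ k ∈ univ.erase i, w i k = ∑ k ∈ univ.erase j, w j k)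
    (j : ι) (hj : ∑ k ∈ univ.erase j, w j k ≠ 0) :
    ∑ i, nonlocalTransition w i j = 1 := by
  have hcol_eq_row : ∀ i, nonlocalTransition w i j = nonlocalTransition w j i := by
    intro i
    simp only [nonlocalTransition, Matrix.of_apply, hsymm i j, hconst i j, eq_comm]
  simp only [hcol_eq_row]
  exact nonlocalTransition_row_sum w j hj

end NonlocalTransition

lemma sum_erase_eq_of_add_right_invariant {G M : Type*} [AddGroup G] [Fintype G]
    [DecidableEq G] [AddCommMonoid M] (w : G → G → M)
    (hw : ∀ a b d, w (a + d) (b + d) = w a b) (i j : G) :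
    ∑ k ∈ univ.erase i, w i k = ∑ k ∈ univ.erase j, w j k := by
  obtain ⟨d, rfl⟩ : ∃ d, j = i + d := ⟨-i + j, by rw [← add_assoc, add_neg_cancel, zero_add]⟩
  refine sum_equiv (Equiv.addRight d) (fun k => ?_) (fun k _ => ?_)
  · simp only [mem_erase, mem_univ, and_true, Equiv.coe_addRight, ne_eq, add_left_inj]
  · rw [Equiv.coe_addRight, hw]

lemma cycleDist_comm {n : ℕ} [NeZero n] (i j : Fin n) : cycleDist i j = cycleDist j i :=
  min_comm _ _

lemma cycleDist_nonneg {n : ℕ} [NeZero n] (i j : Fin n) : 0 ≤ cycleDist i j :=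
  le_min (by positivity) (by positivity)

lemma cycleDist_add_right {n : ℕ} [NeZero n] (i j d : Fin n) :
    cycleDist (i + d) (j + d) = cycleDist i j := by
  simp only [cycleDist, add_sub_add_right_eq_sub]

lemma sum_smul_add_smul_uniform_eq_one {ι : Type*} [Fintype ι] [Nonempty ι]
    (P : Matrix ι ι ℝ) (c : ℝ) (j : ι) (hP : ∑ i, P i j = 1) :
    ∑ i, (c • P + ((1 - c) / Fintype.card ι) • Matrix.of fun _ _ => (1 : ℝ) :
      Matrix ι ι ℝ) i j = 1 := by
  have hcard : (Fintype.card ι : ℝ) ≠ 0 := by positivity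
  simp only [Matrix.add_apply, Matrix.smul_apply, Matrix.of_apply, smul_eq_mul, mul_one,
    sum_add_distrib, ← mul_sum, hP, sum_const, card_univ]
  rw [nsmul_eq_mul, mul_div_cancel₀ _ hcard]
  ring

theorem cycle_nonlocal_pagerank_uniform_general
    {n : ℕ} [NeZero n] (hn : 3 ≤ n)
    (f : ℝ → ℝ)
    (hfpos : ∀ x : ℝ, 0 ≤ x → 0 < f x)
    (Pa : Matrix (Fin n) (Fin n) ℝ)
    (hPa : ∀ i j, Pa i j =
      if j = i then 0
      else f (cycleDist i j) / ∑ k ∈ Finset.univ.erase i, f (cycleDist i k))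
    (c : ℝ)
    (G : Matrix (Fin n) (Fin n) ℝ)
    (hG : G = c • Pa + ((1 - c) / n) • (Matrix.of fun _ _ => (1 : ℝ))) :
    (∀ i, ∑ j, Pa i j = 1) ∧ (∀ j, ∑ i, Pa i j = 1) ∧
      (∀ j, ∑ i, (1 / (n : ℝ)) * G i j = 1 / (n : ℝ)) := by
  have hPa_eq : Pa = nonlocalTransition fun i j => f (cycleDist i j) := Matrix.ext hPa
  have : Nontrivial (Fin n) := Fin.nontrivial_iff_two_le.mpr (by omega)
  have hS : ∀ i : Fin n, ∑ k ∈ univ.erase i, f (cycleDist i k) ≠ 0 := fun i =>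
    (sum_pos (fun k _ => hfpos _ (cycleDist_nonneg i k))
      univ_nontrivial.erase_nonempty).ne'
  have hcol : ∀ j, ∑ i, Pa i j = 1 := by
    rw [hPa_eq]
    refine fun j => nonlocalTransition_col_sum _ (fun i j => by rw [cycleDist_comm])
      (sum_erase_eq_of_add_right_invariant _ fun a b d => by rw [cycleDist_add_right]) j (hS j)
  refine ⟨hPa_eq ▸ fun i => nonlocalTransition_row_sum _ i (hS i), hcol, fun j => ?_⟩
  have hG_col : ∑ i, G i j = 1 := by
    simpa [hG] using sum_smul_add_smul_uniform_eq_one Pa c j (hcol j)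
  rw [← mul_sum, hG_col, mul_one]

/-- For the undirected cycle `C_n`, the nonlocal transition matrix `P_α`
(built from the shortest-path distance and a positive nonincreasing `f`) is doubly
stochastic, and consequently the uniform vector `(1/n)·1` is the stationary distribution of
`G_α = c·P_α + ((1−c)/n)·11ᵀ` for every `c ∈ (0,1]`. -/
theorem cycle_nonlocal_pagerank_uniform
    {n : ℕ} [NeZero n] (hn : 3 ≤ n)
    (f : ℝ → ℝ)
    (hfpos : ∀ x : ℝ, 0 ≤ x → 0 < f x)
    (hfanti : ∀ x y : ℝ, 0 ≤ x → x ≤ y → f y ≤ f x)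
    (Pa : Matrix (Fin n) (Fin n) ℝ)
    (hPa : ∀ i j, Pa i j =
      if j = i then 0
      else f (cycleDist i j) / ∑ k ∈ Finset.univ.erase i, f (cycleDist i k))
    (c : ℝ) (hc : c ∈ Set.Ioc (0 : ℝ) 1)
    (G : Matrix (Fin n) (Fin n) ℝ)
    (hG : G = c • Pa + ((1 - c) / n) • (Matrix.of fun _ _ => (1 : ℝ))) :
    (∀ i, ∑ j, Pa i j = 1) ∧ (∀ j, ∑ i, Pa i j = 1) ∧
      (∀ j, ∑ i, (1 / (n : ℝ)) * G i j = 1 / (n : ℝ)) :=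
  cycle_nonlocal_pagerank_uniform_general hn f hfpos Pa hPa c G hG
end
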